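/- Let Σ be an alphabet, 𝕄 = (M,+,val,𝟘) a timed valuation monoid, 𝓛 ⊆ 𝕋Σ⁺ a deterministically recognizable timed language and r : 𝕋Σ⁺ → M a deterministically recognizable quantitative timed language over 𝕄. Then the quantitative timed language r ∩ 𝓛 is deterministically recognizable over 𝕄. -/

import Mathlib

open scoped NNReal Classical

/-! # Core definitions: timed automata and weighted timed automata -/

/-- Comparison operators ⋈ ∈ {<, ≤, =, ≥, >}. -/
inductive Cmp : Type
  | lt | le | eq | ge | gt
  deriving DecidableEq

/-- Evaluation of a comparison `r ⋈ c` for `r ∈ ℝ≥0` and `c ∈ ℕ`. -/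
def Cmp.eval : Cmp → ℝ≥0 → ℕ → Prop
  | .lt, r, c => r < (c : ℝ≥0)
  | .le, r, c => r ≤ (c : ℝ≥0)
  | .eq, r, c => r = (c : ℝ≥0)
  | .ge, r, c => (c : ℝ≥0) ≤ r
  | .gt, r, c => (c : ℝ≥0) < r

/-- Clock constraints over a set `C` of clocks: `True` or conjunctions of `x ⋈ c`. -/
inductive ClockConstraint (C : Type) : Type
  | tt : ClockConstraint C
  | atom : C → Cmp → ℕ → ClockConstraint C
  | conj : ClockConstraint C → ClockConstraint C → ClockConstraint C

/-- A clock valuation assigns a non-negative real to each clock. -/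
def ClockVal (C : Type) : Type := C → ℝ≥0

/-- Satisfaction of clock constraints. -/
def ClockConstraint.Sat {C : Type} (ν : ClockVal C) : ClockConstraint C → Prop
  | .tt => True
  | .atom x op c => op.eval (ν x) c
  | .conj φ ψ => φ.Sat ν ∧ ψ.Sat ν

/-- `ν + t`: add `t` to every clock. -/
def ClockVal.add {C : Type} (ν : ClockVal C) (t : ℝ≥0) : ClockVal C := fun x => ν x + t

/-- `ν[Λ := 0]`: reset the clocks in `Λ` to `0`. -/
noncomputable def ClockVal.reset {C : Type} (ν : ClockVal C) (Λ : Set C) : ClockVal C :=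
  fun x => if x ∈ Λ then 0 else ν x

/-- The clock valuation assigning `0` to every clock. -/
def ClockVal.zero {C : Type} : ClockVal C := fun _ => 0

/-- An edge of a timed automaton: an element of `L × Σ × Φ(C) × 2^C × L`. -/
structure Edge (L A C : Type) : Type where
  src : L
  label : A
  guard : ClockConstraint C
  reset : Set C
  dst : L

/-- A timed automaton over the alphabet `A`. -/
structure TimedAutomaton (A : Type) : Type 1 where
  L : Type
  C : Type
  finL : Finite L
  finC : Finite C
  I : Set L
  F : Set L
  E : Set (Edge L A C)
  finE : E.Finite

/-- A (non-empty finite) timed word over `A`. -/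
abbrev TimedWord (A : Type) : Type := { w : List (A × ℝ≥0) // w ≠ [] }

/-- `T.IsRunFrom ℓ ν w es` holds iff `es` is the sequence of edges of a run of `T`
reading the timed word `w`, starting in location `ℓ` with clock valuation `ν`,
and ending in a final location. -/
def TimedAutomaton.IsRunFrom {A : Type} (T : TimedAutomaton A) :
    T.L → ClockVal T.C → List (A × ℝ≥0) → List (Edge T.L A T.C) → Prop
  | ℓ, _, [], [] => ℓ ∈ T.F
  | ℓ, ν, (a, t) :: w, e :: es =>
      e ∈ T.E ∧ e.src = ℓ ∧ e.label = a ∧ e.guard.Sat (ν.add t) ∧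
      T.IsRunFrom e.dst ((ν.add t).reset e.reset) w es
  | _, _, [], _ :: _ => False
  | _, _, _ :: _, [] => False

/-- `Run_T(w)`: the set of runs (identified with their edge sequences) of `T` on `w`. -/
def TimedAutomaton.RunOn {A : Type} (T : TimedAutomaton A) (w : TimedWord A) :
    Set (List (Edge T.L A T.C)) :=
  { es | ∃ ℓ₀ ∈ T.I, T.IsRunFrom ℓ₀ ClockVal.zero w.1 es }

/-- `L(T)`: the timed language accepted by `T`. -/
def TimedAutomaton.Lang {A : Type} (T : TimedAutomaton A) : Set (TimedWord A) :=
  { w | (T.RunOn w).Nonempty }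

/-- A timed automaton is unambiguous if every timed word has at most one run. -/
def TimedAutomaton.Unambiguous {A : Type} (T : TimedAutomaton A) : Prop :=
  ∀ w : TimedWord A, (T.RunOn w).Subsingleton

/-- A timed automaton is deterministic if it has a single initial location and the guards of
any two distinct edges with the same source and label are jointly unsatisfiable. -/
def TimedAutomaton.Deterministic {A : Type} (T : TimedAutomaton A) : Prop :=
  (∃ ℓ, T.I = {ℓ}) ∧
  ∀ e₁ ∈ T.E, ∀ e₂ ∈ T.E, e₁.src = e₂.src → e₁.label = e₂.label → e₁ ≠ e₂ →
    ∀ ν : ClockVal T.C, ¬ (e₁.guard.Sat ν ∧ e₂.guard.Sat ν)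

/-- A timed automaton is sequential if it has a single initial location and any two edges
with the same source and label are equal. -/
def TimedAutomaton.Sequential {A : Type} (T : TimedAutomaton A) : Prop :=
  (∃ ℓ, T.I = {ℓ}) ∧
  ∀ e₁ ∈ T.E, ∀ e₂ ∈ T.E, e₁.src = e₂.src → e₁.label = e₂.label → e₁ = e₂

/-- A timed language is recognizable by a timed automaton satisfying `P`. -/
def TLRecognizableBy {A : Type} (P : TimedAutomaton A → Prop) (𝓛 : Set (TimedWord A)) : Prop :=
  ∃ T : TimedAutomaton A, P T ∧ T.Lang = 𝓛

/-- A weighted timed automaton over the alphabet `A` and (the domain `M` of) a timed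
valuation monoid: a timed automaton together with weights on locations and edges.
The timed valuation monoid itself is given by an `AddCommMonoid M` instance together with a
timed valuation function `val : List ((M × M) × ℝ≥0) → M` (only its values on non-empty
lists, i.e. on `𝕋(M×M)⁺`, ever matter). -/
structure WTA (A M : Type) extends TimedAutomaton A where
  wtL : L → M
  wtE : Edge L A C → M

/-- The timed word `wt♯(ρ) ∈ 𝕋(M×M)⁺` associated with a run: the `i`-th letter is
`((wt(ℓ_{i-1}), wt(e_i)), t_i)`, where `ℓ_{i-1}` is the source location of edge `e_i`. -/
def WTA.runWord {A M : Type} (W : WTA A M) (w : List (A × ℝ≥0))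
    (es : List (Edge W.L A W.C)) : List ((M × M) × ℝ≥0) :=
  List.zipWith (fun (p : A × ℝ≥0) e => ((W.wtL e.src, W.wtE e), p.2)) w es

/-- The behavior `‖W‖ : 𝕋A⁺ → M` of a WTA: `‖W‖(w) = Σ (val(wt♯(ρ)) : ρ ∈ Run_W(w))`,
the empty sum being `0` (the monoid unit `𝟘`). -/
noncomputable def WTA.behavior {A M : Type} [AddCommMonoid M]
    (val : List ((M × M) × ℝ≥0) → M) (W : WTA A M) (w : TimedWord A) : M :=
  ∑ᶠ es ∈ W.toTimedAutomaton.RunOn w, val (W.runWord w.1 es)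

/-- A quantitative timed language `r : 𝕋A⁺ → M` is recognizable over the timed valuation
monoid `(M, +, val, 𝟘)` by a WTA whose underlying timed automaton satisfies `P`. -/
def QTLRecognizableBy {A M : Type} [AddCommMonoid M] (val : List ((M × M) × ℝ≥0) → M)
    (P : TimedAutomaton A → Prop) (r : TimedWord A → M) : Prop :=
  ∃ W : WTA A M, P W.toTimedAutomaton ∧ ∀ w, W.behavior val w = r w

/-- Recognizability (no restriction on the underlying timed automaton). -/
def QTLRecognizable {A M : Type} [AddCommMonoid M] (val : List ((M × M) × ℝ≥0) → M)
    (r : TimedWord A → M) : Prop :=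
  ∃ W : WTA A M, ∀ w, W.behavior val w = r w

/-- Renaming of timed words along `h : Γ → A`. -/
def mapTimedWord {Γ A : Type} (h : Γ → A) (v : TimedWord Γ) : TimedWord A :=
  ⟨v.1.map (fun p => (h p.1, p.2)), by
    cases v with
    | mk l hl => cases l with
      | nil => exact absurd rfl hl
      | cons p l => simp⟩

/-- `h(r)(w) = Σ (r(v) : v ∈ 𝕋Γ⁺, h(v) = w)` (a finite sum when `Γ` is finite). -/
noncomputable def pushQTL {Γ A M : Type} [AddCommMonoid M] (h : Γ → A)
    (r : TimedWord Γ → M) (w : TimedWord A) : M :=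
  ∑ᶠ v ∈ { v : TimedWord Γ | mapTimedWord h v = w }, r v

/-- `(val ∘ g)(w) = val((g(a₁),t₁)…(g(aₙ),tₙ))`. -/
def valComp {A M : Type} (val : List ((M × M) × ℝ≥0) → M) (g : A → M × M)
    (w : TimedWord A) : M :=
  val (w.1.map (fun p => (g p.1, p.2)))

/-- The intersection `r ∩ 𝓛` of a quantitative timed language with a timed language. -/
noncomputable def interQTL {A M : Type} [Zero M] (r : TimedWord A → M)
    (𝓛 : Set (TimedWord A)) (w : TimedWord A) : M :=
  if w ∈ 𝓛 then r w else 0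

/-- Membership in the Nivat class `N^P(A, 𝕄)`: `𝕃 = h((val ∘ g) ∩ 𝓛)` for some alphabet `Γ`,
maps `h : Γ → A`, `g : Γ → M × M` and a timed language `𝓛` recognizable by a timed
automaton satisfying `P`. -/
def NivatMem {A M : Type} [AddCommMonoid M] (val : List ((M × M) × ℝ≥0) → M)
    (P : ∀ {Γ : Type}, TimedAutomaton Γ → Prop) (𝕃 : TimedWord A → M) : Prop :=
  ∃ (Γ : Type) (_ : Finite Γ) (_ : Nonempty Γ) (h : Γ → A) (g : Γ → M × M)
    (𝓛 : Set (TimedWord Γ)),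
      TLRecognizableBy P 𝓛 ∧ ∀ w, 𝕃 w = pushQTL h (interQTL (valComp val g) 𝓛) w

/-- Membership in the class `H^P(A, 𝕄)`: `𝕃 = h(r)` for some alphabet `Γ`, `h : Γ → A`
and a quantitative timed language `r` recognizable by a WTA whose underlying timed
automaton satisfies `P`. -/
def HMem {A M : Type} [AddCommMonoid M] (val : List ((M × M) × ℝ≥0) → M)
    (P : ∀ {Γ : Type}, TimedAutomaton Γ → Prop) (𝕃 : TimedWord A → M) : Prop :=
  ∃ (Γ : Type) (_ : Finite Γ) (_ : Nonempty Γ) (h : Γ → A) (r : TimedWord Γ → M),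
      QTLRecognizableBy val (fun T => P T) r ∧ ∀ w, 𝕃 w = pushQTL h r w

/-- Idempotency of a timed valuation monoid. -/
def IsIdempotent (M : Type) [Add M] : Prop := ∀ m : M, m + m = m

/-- Location-independence of a timed valuation function: the value of `val` on a non-empty
timed word over `M × M` depends only on the second components and the time stamps. -/
def LocIndep {M : Type} (val : List ((M × M) × ℝ≥0) → M) : Prop :=
  ∀ l l' : List ((M × M) × ℝ≥0), l ≠ [] →
    l.map (fun p => (p.1.2, p.2)) = l'.map (fun p => (p.1.2, p.2)) → val l = val l'

/-! The product of the weighted automaton for `r` with the automaton for `𝓛` runs both in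
parallel on disjoint clocks and carries the weights of the first factor; it is again
deterministic. Its runs on `w` are the pairs of runs of the factors, and since the second
factor has a unique run on `w ∈ 𝓛` and none on `w ∉ 𝓛`, projecting to the first factor is a
weight-preserving bijection onto the runs of the weighted automaton when `w ∈ 𝓛`. -/

namespace ClockConstraint

variable {C D : Type}

def map (f : C → D) : ClockConstraint C → ClockConstraint D
  | .tt => .tt
  | .atom x o c => .atom (f x) o c
  | .conj φ ψ => .conj (φ.map f) (ψ.map f)

theorem sat_map (f : C → D) (φ : ClockConstraint C) (ν : ClockVal D) :
    (φ.map f).Sat ν ↔ φ.Sat (ν ∘ f) := by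
  induction φ with
  | tt | atom => rfl
  | conj φ ψ ihφ ihψ => exact and_congr ihφ ihψ

def restrictInl : ClockConstraint (C ⊕ D) → ClockConstraint C
  | .tt => .tt
  | .atom (.inl x) o c => .atom x o c
  | .atom (.inr _) _ _ => .tt
  | .conj φ ψ => .conj φ.restrictInl ψ.restrictInl

theorem restrictInl_map_inl (φ : ClockConstraint C) :
    (φ.map (Sum.inl : C → C ⊕ D)).restrictInl = φ := by
  induction φ <;> simp [map, restrictInl, *]

end ClockConstraint

namespace ClockVal

variable {C D : Type}

theorem reset_image_union_comp_inl (ν : ClockVal (C ⊕ D)) (Λ₁ : Set C) (Λ₂ : Set D) :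
    (ν.reset (Sum.inl '' Λ₁ ∪ Sum.inr '' Λ₂) : C ⊕ D → ℝ≥0) ∘ Sum.inl =
      reset (ν ∘ Sum.inl) Λ₁ := by
  funext x
  show ν.reset _ (Sum.inl x) = _
  simp only [reset, Set.mem_union, Set.mem_image, Sum.inl.injEq, exists_eq_right, reduceCtorEq,
    and_false, exists_false, or_false]
  rfl

theorem reset_image_union_comp_inr (ν : ClockVal (C ⊕ D)) (Λ₁ : Set C) (Λ₂ : Set D) :
    (ν.reset (Sum.inl '' Λ₁ ∪ Sum.inr '' Λ₂) : C ⊕ D → ℝ≥0) ∘ Sum.inr =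
      reset (ν ∘ Sum.inr) Λ₂ := by
  funext x
  show ν.reset _ (Sum.inr x) = _
  simp only [reset, Set.mem_union, Set.mem_image, reduceCtorEq, and_false, exists_false,
    Sum.inr.injEq, exists_eq_right, false_or]
  rfl

end ClockVal

namespace Edge

variable {A L₁ L₂ C₁ C₂ : Type}

def prod (e₁ : Edge L₁ A C₁) (e₂ : Edge L₂ A C₂) : Edge (L₁ × L₂) A (C₁ ⊕ C₂) :=
  ⟨(e₁.src, e₂.src), e₁.label, .conj (e₁.guard.map Sum.inl) (e₂.guard.map Sum.inr),
    Sum.inl '' e₁.reset ∪ Sum.inr '' e₂.reset, (e₁.dst, e₂.dst)⟩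

def fst (e : Edge (L₁ × L₂) A (C₁ ⊕ C₂)) : Edge L₁ A C₁ :=
  ⟨e.src.1, e.label, (match e.guard with | .conj φ _ => φ.restrictInl | _ => .tt),
    Sum.inl ⁻¹' e.reset, e.dst.1⟩

@[simp]
theorem fst_prod (e₁ : Edge L₁ A C₁) (e₂ : Edge L₂ A C₂) : (e₁.prod e₂).fst = e₁ := by
  cases e₁
  simp [fst, prod, ClockConstraint.restrictInl_map_inl, Set.preimage_union,
    Set.preimage_image_eq _ Sum.inl_injective]

theorem sat_prod_guard (e₁ : Edge L₁ A C₁) (e₂ : Edge L₂ A C₂) (ν : ClockVal (C₁ ⊕ C₂)) :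
    (e₁.prod e₂).guard.Sat ν ↔ e₁.guard.Sat (ν ∘ Sum.inl) ∧ e₂.guard.Sat (ν ∘ Sum.inr) :=
  and_congr (ClockConstraint.sat_map _ _ _) (ClockConstraint.sat_map _ _ _)

theorem map_fst_zipWith_prod {es₁ : List (Edge L₁ A C₁)} {es₂ : List (Edge L₂ A C₂)}
    (h : es₁.length = es₂.length) : (List.zipWith prod es₁ es₂).map fst = es₁ := by
  induction es₁ generalizing es₂ with
  | nil => rfl
  | cons e₁ es₁ ih =>
    obtain _ | ⟨e₂, es₂⟩ := es₂
    · simp at h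
    · simp [ih (Nat.succ_injective h)]

end Edge

namespace TimedAutomaton

variable {A : Type}

noncomputable def prod (T₁ T₂ : TimedAutomaton A) : TimedAutomaton A where
  L := T₁.L × T₂.L
  C := T₁.C ⊕ T₂.C
  finL := have := T₁.finL; have := T₂.finL; inferInstance
  finC := have := T₁.finC; have := T₂.finC; inferInstance
  I := T₁.I ×ˢ T₂.I
  F := T₁.F ×ˢ T₂.F
  E := {e | ∃ e₁ ∈ T₁.E, ∃ e₂ ∈ T₂.E, e₁.label = e₂.label ∧ e₁.prod e₂ = e}
  finE := (T₁.finE.image2 Edge.prod T₂.finE).subset <| by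
    rintro _ ⟨e₁, h₁, e₂, h₂, -, rfl⟩
    exact Set.mem_image2_of_mem h₁ h₂

variable (T : TimedAutomaton A)

theorem isRunFrom_nil_iff {ℓ : T.L} {ν : ClockVal T.C} {es : List (Edge T.L A T.C)} :
    T.IsRunFrom ℓ ν [] es ↔ es = [] ∧ ℓ ∈ T.F := by
  cases es <;> simp [IsRunFrom]

theorem isRunFrom_cons_iff {ℓ : T.L} {ν : ClockVal T.C} {a : A} {t : ℝ≥0}
    {w : List (A × ℝ≥0)} {es : List (Edge T.L A T.C)} :
    T.IsRunFrom ℓ ν ((a, t) :: w) es ↔ ∃ e es', es = e :: es' ∧ e ∈ T.E ∧ e.src = ℓ ∧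
      e.label = a ∧ e.guard.Sat (ν.add t) ∧ T.IsRunFrom e.dst ((ν.add t).reset e.reset) w es' := by
  cases es <;> simp [IsRunFrom]

variable {T}

theorem IsRunFrom.length_eq {ℓ : T.L} {ν : ClockVal T.C} {w : List (A × ℝ≥0)}
    {es : List (Edge T.L A T.C)} (h : T.IsRunFrom ℓ ν w es) : es.length = w.length := by
  induction w generalizing ℓ ν es with
  | nil => simp [(T.isRunFrom_nil_iff.1 h).1]
  | cons p w ih =>
    obtain ⟨e, es', rfl, -, -, -, -, h'⟩ := T.isRunFrom_cons_iff.1 h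
    simp [ih h']

theorem length_eq_of_mem_runOn {w : TimedWord A} {es : List (Edge T.L A T.C)}
    (h : es ∈ T.RunOn w) : es.length = w.1.length :=
  h.choose_spec.2.length_eq

theorem Deterministic.isRunFrom_unique (hT : T.Deterministic) {ℓ : T.L} {ν : ClockVal T.C}
    {w : List (A × ℝ≥0)} {es es' : List (Edge T.L A T.C)} (h : T.IsRunFrom ℓ ν w es)
    (h' : T.IsRunFrom ℓ ν w es') : es = es' := by
  induction w generalizing ℓ ν es es' with
  | nil => rw [(T.isRunFrom_nil_iff.1 h).1, (T.isRunFrom_nil_iff.1 h').1]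
  | cons p w ih =>
    obtain ⟨e, es, rfl, hE, hs, hl, hg, hrun⟩ := T.isRunFrom_cons_iff.1 h
    obtain ⟨e', es', rfl, hE', hs', hl', hg', hrun'⟩ := T.isRunFrom_cons_iff.1 h'
    obtain rfl : e = e' := by
      by_contra hne
      exact hT.2 e hE e' hE' (hs.trans hs'.symm) (hl.trans hl'.symm) hne _ ⟨hg, hg'⟩
    rw [ih hrun hrun']

theorem Deterministic.unambiguous (hT : T.Deterministic) : T.Unambiguous := by
  rintro w es ⟨ℓ, hℓ, h⟩ es' ⟨ℓ', hℓ', h'⟩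
  obtain ⟨ι, hι⟩ := hT.1
  rw [hι] at hℓ hℓ'
  subst hℓ hℓ'
  exact hT.isRunFrom_unique h h'

theorem isRunFrom_prod_iff {T₁ T₂ : TimedAutomaton A} {ℓ : (T₁.prod T₂).L}
    {ν : ClockVal (T₁.prod T₂).C} {w : List (A × ℝ≥0)}
    {es : List (Edge (T₁.prod T₂).L A (T₁.prod T₂).C)} :
    (T₁.prod T₂).IsRunFrom ℓ ν w es ↔ ∃ es₁ es₂, T₁.IsRunFrom ℓ.1 (ν ∘ Sum.inl) w es₁ ∧
      T₂.IsRunFrom ℓ.2 (ν ∘ Sum.inr) w es₂ ∧ List.zipWith Edge.prod es₁ es₂ = es := by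
  induction w generalizing ℓ ν es with
  | nil =>
    constructor
    · intro h
      obtain ⟨rfl, h₁, h₂⟩ := (isRunFrom_nil_iff _).1 h
      exact ⟨[], [], h₁, h₂, rfl⟩
    · rintro ⟨es₁, es₂, h₁, h₂, rfl⟩
      obtain ⟨rfl, h₁⟩ := (isRunFrom_nil_iff _).1 h₁
      obtain ⟨rfl, h₂⟩ := (isRunFrom_nil_iff _).1 h₂
      exact ⟨h₁, h₂⟩
  | cons p w ih =>
    obtain ⟨a, t⟩ := p
    constructor
    · intro h
      obtain ⟨_, es, rfl, ⟨e₁, h₁, e₂, h₂, hlab, rfl⟩, hs, hl, hg, hrun⟩ :=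
        (isRunFrom_cons_iff _).1 h
      obtain ⟨es₁, es₂, hr₁, hr₂, rfl⟩ := ih.1 hrun
      have hr₁' : T₁.IsRunFrom e₁.dst ((ClockVal.add (ν ∘ Sum.inl) t).reset e₁.reset) w es₁ :=
        ClockVal.reset_image_union_comp_inl (ν.add t) e₁.reset e₂.reset ▸ hr₁
      have hr₂' : T₂.IsRunFrom e₂.dst ((ClockVal.add (ν ∘ Sum.inr) t).reset e₂.reset) w es₂ :=
        ClockVal.reset_image_union_comp_inr (ν.add t) e₁.reset e₂.reset ▸ hr₂
      obtain ⟨hg₁, hg₂⟩ := (Edge.sat_prod_guard _ _ _).1 hg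
      exact ⟨e₁ :: es₁, e₂ :: es₂,
        (isRunFrom_cons_iff _).2 ⟨e₁, es₁, rfl, h₁, congrArg Prod.fst hs, hl, hg₁, hr₁'⟩,
        (isRunFrom_cons_iff _).2 ⟨e₂, es₂, rfl, h₂, congrArg Prod.snd hs, hlab ▸ hl, hg₂, hr₂'⟩,
        rfl⟩
    · rintro ⟨_, _, h₁, h₂, rfl⟩
      obtain ⟨e₁, es₁, rfl, h₁, hs₁, hl₁, hg₁, hr₁⟩ := (isRunFrom_cons_iff _).1 h₁
      obtain ⟨e₂, es₂, rfl, h₂, hs₂, hl₂, hg₂, hr₂⟩ := (isRunFrom_cons_iff _).1 h₂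
      refine (isRunFrom_cons_iff _).2 ⟨e₁.prod e₂, _, rfl,
        ⟨e₁, h₁, e₂, h₂, hl₁.trans hl₂.symm, rfl⟩, Prod.ext hs₁ hs₂, hl₁,
        (Edge.sat_prod_guard _ _ _).2 ⟨hg₁, hg₂⟩, ih.2 ⟨es₁, es₂, ?_, ?_, rfl⟩⟩
      · exact ClockVal.reset_image_union_comp_inl (ν.add t) e₁.reset e₂.reset ▸ hr₁
      · exact ClockVal.reset_image_union_comp_inr (ν.add t) e₁.reset e₂.reset ▸ hr₂

theorem mem_runOn_prod_iff {T₁ T₂ : TimedAutomaton A} {w : TimedWord A}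
    {es : List (Edge (T₁.prod T₂).L A (T₁.prod T₂).C)} :
    es ∈ (T₁.prod T₂).RunOn w ↔
      ∃ es₁ ∈ T₁.RunOn w, ∃ es₂ ∈ T₂.RunOn w, List.zipWith Edge.prod es₁ es₂ = es := by
  constructor
  · rintro ⟨ℓ, ⟨hℓ₁, hℓ₂⟩, h⟩
    obtain ⟨es₁, es₂, h₁, h₂, rfl⟩ := isRunFrom_prod_iff.1 h
    exact ⟨es₁, ⟨ℓ.1, hℓ₁, h₁⟩, es₂, ⟨ℓ.2, hℓ₂, h₂⟩, rfl⟩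
  · rintro ⟨es₁, ⟨ℓ₁, hℓ₁, h₁⟩, es₂, ⟨ℓ₂, hℓ₂, h₂⟩, rfl⟩
    exact ⟨(ℓ₁, ℓ₂), ⟨hℓ₁, hℓ₂⟩, isRunFrom_prod_iff.2 ⟨es₁, es₂, h₁, h₂, rfl⟩⟩

theorem Deterministic.prod {T₁ T₂ : TimedAutomaton A} (h₁ : T₁.Deterministic)
    (h₂ : T₂.Deterministic) : (T₁.prod T₂).Deterministic := by
  obtain ⟨⟨ι₁, hι₁⟩, hE₁⟩ := h₁
  obtain ⟨⟨ι₂, hι₂⟩, hE₂⟩ := h₂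
  refine ⟨⟨(ι₁, ι₂), ?_⟩, ?_⟩
  · show T₁.I ×ˢ T₂.I = {(ι₁, ι₂)}
    rw [hι₁, hι₂, Set.singleton_prod_singleton]
  rintro _ ⟨e₁, he₁, e₂, he₂, hlab, rfl⟩ _ ⟨e₁', he₁', e₂', he₂', hlab', rfl⟩ hsrc hlabel hne ν
    ⟨hg, hg'⟩
  obtain ⟨hg₁, hg₂⟩ := (Edge.sat_prod_guard _ _ _).1 hg
  obtain ⟨hg₁', hg₂'⟩ := (Edge.sat_prod_guard _ _ _).1 hg'
  by_cases h : e₁ = e₁'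
  · subst h
    exact hE₂ e₂ he₂ e₂' he₂' (congrArg Prod.snd hsrc) (hlab.symm.trans hlab')
      (fun h => hne (h ▸ rfl)) _ ⟨hg₂, hg₂'⟩
  · exact hE₁ e₁ he₁ e₁' he₁' (congrArg Prod.fst hsrc) hlabel h _ ⟨hg₁, hg₁'⟩

end TimedAutomaton

namespace WTA

variable {A M : Type}

noncomputable def prod (W : WTA A M) (T : TimedAutomaton A) : WTA A M where
  toTimedAutomaton := W.toTimedAutomaton.prod T
  wtL ℓ := W.wtL ℓ.1
  wtE e := W.wtE e.fst

theorem runWord_prod (W : WTA A M) (T : TimedAutomaton A) (w : List (A × ℝ≥0))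
    (es : List (Edge (W.prod T).L A (W.prod T).C)) :
    (W.prod T).runWord w es = W.runWord w (es.map Edge.fst) := by
  induction w generalizing es with
  | nil => rfl
  | cons p w ih =>
    cases es with
    | nil => rfl
    | cons e es => exact congrArg (List.cons _) (ih es)

theorem behavior_prod_of_unambiguous [AddCommMonoid M] (val : List ((M × M) × ℝ≥0) → M)
    (W : WTA A M) {T : TimedAutomaton A} (hT : T.Unambiguous) (w : TimedWord A) :
    (W.prod T).behavior val w = interQTL (W.behavior val) T.Lang w := by
  have map_fst {es₁ es₂} (h₁ : es₁ ∈ W.RunOn w) (h₂ : es₂ ∈ T.RunOn w) :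
      (List.zipWith Edge.prod es₁ es₂).map Edge.fst = es₁ :=
    Edge.map_fst_zipWith_prod <| (TimedAutomaton.length_eq_of_mem_runOn h₁).trans
      (TimedAutomaton.length_eq_of_mem_runOn h₂).symm
  unfold interQTL
  split_ifs with hw
  · obtain ⟨es₂, h₂⟩ := hw
    refine finsum_mem_eq_of_bijOn (List.map Edge.fst) ⟨?_, ?_, ?_⟩
      fun es _ => congrArg val (runWord_prod W T _ es)
    · intro es hes
      obtain ⟨es₁, h₁, es₂', h₂', rfl⟩ := TimedAutomaton.mem_runOn_prod_iff.1 hes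
      exact (map_fst h₁ h₂').symm ▸ h₁
    · intro es hes es' hes' h
      obtain ⟨es₁, h₁, es₂, h₂, rfl⟩ := TimedAutomaton.mem_runOn_prod_iff.1 hes
      obtain ⟨es₁', h₁', es₂', h₂', rfl⟩ := TimedAutomaton.mem_runOn_prod_iff.1 hes'
      obtain rfl : es₁ = es₁' := (map_fst h₁ h₂).symm.trans (h.trans (map_fst h₁' h₂'))
      rw [hT w h₂ h₂']
    · intro es₁ h₁
      exact ⟨_, TimedAutomaton.mem_runOn_prod_iff.2 ⟨es₁, h₁, es₂, h₂, rfl⟩, map_fst h₁ h₂⟩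
  · have : (W.prod T).RunOn w = ∅ := Set.eq_empty_of_forall_notMem fun es hes => by
      obtain ⟨-, -, es₂, h₂, -⟩ := TimedAutomaton.mem_runOn_prod_iff.1 hes
      exact hw ⟨es₂, h₂⟩
    rw [behavior, this, finsum_mem_empty]

end WTA

theorem interQTL_deterministically_recognizable_general {S M : Type}
    [AddCommMonoid M] (val : List ((M × M) × ℝ≥0) → M)
    (𝓛 : Set (TimedWord S)) (h𝓛 : TLRecognizableBy TimedAutomaton.Deterministic 𝓛)
    (r : TimedWord S → M)
    (hr : QTLRecognizableBy val TimedAutomaton.Deterministic r) :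
    QTLRecognizableBy val TimedAutomaton.Deterministic (interQTL r 𝓛) := by
  obtain ⟨T, hT, rfl⟩ := h𝓛
  obtain ⟨W, hW, hWr⟩ := hr
  refine ⟨W.prod T, hW.prod hT, fun w => ?_⟩
  rw [W.behavior_prod_of_unambiguous val hT.unambiguous, funext hWr]

/-- If `𝓛 ⊆ 𝕋Σ⁺` is a deterministically recognizable timed language and
`r : 𝕋Σ⁺ → M` is a deterministically recognizable quantitative timed language over a timed
valuation monoid `𝕄`, then `r ∩ 𝓛` is deterministically recognizable over `𝕄`. -/
theorem interQTL_deterministically_recognizable {S M : Type} [Finite S] [Nonempty S]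
    [AddCommMonoid M] (val : List ((M × M) × ℝ≥0) → M)
    (𝓛 : Set (TimedWord S)) (h𝓛 : TLRecognizableBy TimedAutomaton.Deterministic 𝓛)
    (r : TimedWord S → M)
    (hr : QTLRecognizableBy val TimedAutomaton.Deterministic r) :
    QTLRecognizableBy val TimedAutomaton.Deterministic (interQTL r 𝓛) :=
  interQTL_deterministically_recognizable_general val 𝓛 h𝓛 r hr
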